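/- Assume both causality axioms: T(S₁ ∪ S₂) = T(S₁)·T(S₂) and T'_l(S₁ ∪ S₂) = T'_l(S₁)·T(S₂) + T(S₁)·T'_l(S₂) for all disjoint S₁, S₂ ⊆ I with x(S₁) ≥ x(S₂). Then the barred families factorize in reversed order: T̄'_l(S₁ ∪ S₂) = T̄'_l(S₂)·T̄(S₁) + T̄(S₂)·T̄'_l(S₁) for all disjoint S₁, S₂ with x(S₁) ≥ x(S₂). -/

import Mathlib

/-- The Minkowski quadratic form on `ℝ⁴`. -/
def minkQ (x : Fin 4 → ℝ) : ℝ := x 0 ^ 2 - x 1 ^ 2 - x 2 ^ 2 - x 3 ^ 2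

/-- The open backward light cone `V⁻`. -/
def Vminus : Set (Fin 4 → ℝ) := {x | 0 < minkQ x ∧ x 0 < 0}

/-- Sum over all ordered partitions of `X` into `r ≥ 1` nonempty pairwise disjoint blocks
`X₁, …, X_r` of `(-1)^r * T X₁ * ⋯ * T X_r` (with value `1` for `X = ∅`), computed by peeling
off the first block. -/
def opSum {A : Type*} [Ring A] {ι : Type*} [DecidableEq ι]
    (T : Finset ι → A) (X : Finset ι) : A :=
  if _hX : X = ∅ then 1
  else
    ∑ Y ∈ (X.powerset.filter (fun Y => Y ≠ ∅)).attach,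
      (-1 : A) * T Y.1 * opSum T (X \ Y.1)
termination_by X.card
decreasing_by
  have hY := Y.2
  simp only [Finset.mem_filter, Finset.mem_powerset] at hY
  have h1 : Y.1.card ≤ X.card := Finset.card_le_card hY.1
  have h2 : 0 < Y.1.card := Finset.card_pos.mpr (Finset.nonempty_iff_ne_empty.mpr hY.2)
  rw [Finset.card_sdiff, Finset.inter_eq_left.mpr hY.1]
  omega

/-- The antichronological products `T̄`, defined by `T̄(∅) = 1` and
`(−1)^{|X|} T̄(X) = Σ_{r=1}^{|X|} (−1)^r Σ T(X₁)⋯T(X_r)`, the inner sum running over all ordered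
partitions of `X` into `r` nonempty pairwise disjoint subsets. -/
def chronoBar {A : Type*} [Ring A] {ι : Type*} [DecidableEq ι]
    (T : Finset ι → A) (X : Finset ι) : A :=
  (-1 : A) ^ X.card * opSum T X

/-- Sum over all ordered partitions of `X` into `r ≥ 1` nonempty pairwise disjoint blocks of
`(-1)^r * T X₁ ⋯ T' X_k ⋯ T X_r`, with `T'` replacing `T` in exactly one block (value `0` for
`X = ∅`), computed by peeling off the first block. -/
def opSumD {A : Type*} [Ring A] {ι : Type*} [DecidableEq ι]
    (T T' : Finset ι → A) (X : Finset ι) : A :=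
  if _hX : X = ∅ then 0
  else
    ∑ Y ∈ (X.powerset.filter (fun Y => Y ≠ ∅)).attach,
      (-1 : A) * (T' Y.1 * opSum T (X \ Y.1) + T Y.1 * opSumD T T' (X \ Y.1))
termination_by X.card
decreasing_by
  have hY := Y.2
  simp only [Finset.mem_filter, Finset.mem_powerset] at hY
  have h1 : Y.1.card ≤ X.card := Finset.card_le_card hY.1
  have h2 : 0 < Y.1.card := Finset.card_pos.mpr (Finset.nonempty_iff_ne_empty.mpr hY.2)
  rw [Finset.card_sdiff, Finset.inter_eq_left.mpr hY.1]
  omega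

/-- The barred family `T̄'`, defined by `T̄'(∅) = 0` and
`(−1)^{|X|} T̄'(X) = Σ_{r=1}^{|X|} (−1)^r Σ Σ_{k=1}^{r} T(X₁)⋯T'(X_k)⋯T(X_r)`, the inner sum over
ordered partitions of `X` into `r` nonempty pairwise disjoint blocks, with `T'` replacing `T`
in exactly one block. -/
def chronoBarD {A : Type*} [Ring A] {ι : Type*} [DecidableEq ι]
    (T T' : Finset ι → A) (X : Finset ι) : A :=
  (-1 : A) ^ X.card * opSumD T T' X

/-!
Under subset convolution `(f ⋆ g) X = ∑_{Y ⊆ X} f Y * g (X \ Y)`, the family `opSum T` is the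
right inverse of `T`, and since `T ∅ = 1` it is the only one. If `T` factorizes over the disjoint
union `S₁ ∪ S₂`, then `X ↦ opSum T (X ∩ S₂) * opSum T (X ∩ S₁)` is another right inverse on
subsets of `S₁ ∪ S₂`, so the barred products factorize in reversed order. The derived family
needs no separate argument: over the dual numbers `A[ε]`, the two causality axioms say exactly
that `T + ε T'_l` factorizes, and the barred products of `T + ε T'_l` are `T̄ + ε T̄'_l`.
-/

open Finset TrivSqZeroExt

theorem Finset.sum_powerset_union_of_disjoint {ι M : Type*} [DecidableEq ι] [AddCommMonoid M]
    {s t : Finset ι} (hst : Disjoint s t) (f : Finset ι → M) :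
    ∑ u ∈ (s ∪ t).powerset, f u = ∑ u ∈ s.powerset, ∑ v ∈ t.powerset, f (u ∪ v) := by
  rw [powerset_union, ← image_sup_product, sum_image, sum_product]
  · rfl
  rintro ⟨u, v⟩ huv ⟨u', v'⟩ huv' h
  simp only [coe_product, Set.mem_prod, mem_coe, mem_powerset] at huv huv'
  have hs := disjoint_left.1 hst
  simp only [Function.uncurry_apply_pair, sup_eq_union, Finset.ext_iff, mem_union] at h
  simp only [Prod.mk.injEq, Finset.ext_iff, subset_iff] at huv huv' ⊢
  grind

theorem Finset.sdiff_ssubset_of_mem_erase_empty {ι : Type*} [DecidableEq ι] {X Y : Finset ι}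
    (hY : Y ∈ X.powerset.erase ∅) : X \ Y ⊂ X :=
  sdiff_ssubset (mem_powerset.1 (mem_of_mem_erase hY))
    (nonempty_iff_ne_empty.2 (ne_of_mem_erase hY))

section
variable {A : Type*} [Ring A] {ι : Type*} [DecidableEq ι]

@[simp]
theorem opSum_empty (T : Finset ι → A) : opSum T ∅ = 1 := by
  rw [opSum]; simp

theorem opSum_of_ne_empty (T : Finset ι → A) {X : Finset ι} (hX : X ≠ ∅) :
    opSum T X = -∑ Y ∈ X.powerset.erase ∅, T Y * opSum T (X \ Y) := by
  rw [opSum, dif_neg hX, ← filter_ne', ← sum_neg_distrib,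
    sum_attach _ fun Y => (-1 : A) * T Y * opSum T (X \ Y)]
  simp only [neg_mul, one_mul]

@[simp]
theorem opSumD_empty (T T' : Finset ι → A) : opSumD T T' ∅ = 0 := by
  rw [opSumD]; simp

theorem opSumD_of_ne_empty (T T' : Finset ι → A) {X : Finset ι} (hX : X ≠ ∅) :
    opSumD T T' X =
      -∑ Y ∈ X.powerset.erase ∅, (T' Y * opSum T (X \ Y) + T Y * opSumD T T' (X \ Y)) := by
  rw [opSumD, dif_neg hX, ← filter_ne', ← sum_neg_distrib,
    sum_attach _ fun Y => (-1 : A) * (T' Y * opSum T (X \ Y) + T Y * opSumD T T' (X \ Y))]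
  simp only [neg_one_mul]

theorem sum_powerset_mul_opSum {T : Finset ι → A} (hT : T ∅ = 1) (X : Finset ι) :
    ∑ Y ∈ X.powerset, T Y * opSum T (X \ Y) = if X = ∅ then 1 else 0 := by
  rcases eq_or_ne X ∅ with rfl | hX
  · simp [hT]
  rw [if_neg hX, ← add_sum_erase _ _ (empty_mem_powerset X), hT, one_mul, sdiff_empty,
    opSum_of_ne_empty T hX, neg_add_cancel]

theorem eq_opSum_of_sum_powerset_mul {T : Finset ι → A} (hT : T ∅ = 1) {S : Finset ι}
    {G : Finset ι → A}
    (hG : ∀ X ⊆ S, ∑ Y ∈ X.powerset, T Y * G (X \ Y) = if X = ∅ then 1 else 0) :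
    ∀ X ⊆ S, G X = opSum T X := by
  intro X
  induction X using Finset.strongInduction with
  | H X ih =>
  intro hXS
  have h := (hG X hXS).trans (sum_powerset_mul_opSum hT X).symm
  rw [← add_sum_erase _ _ (empty_mem_powerset X), ← add_sum_erase _ _ (empty_mem_powerset X),
    hT, one_mul, one_mul, sdiff_empty] at h
  refine add_right_cancel (h.trans (congrArg _ (sum_congr rfl fun Y hY => ?_)))
  have hsub := sdiff_ssubset_of_mem_erase_empty hY
  rw [ih _ hsub (hsub.subset.trans hXS)]

theorem sum_powerset_union_mul_opSum_mul_opSum {T : Finset ι → A} (hT : T ∅ = 1)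
    {X₁ X₂ : Finset ι} (hfac : ∀ Y₁ ⊆ X₁, ∀ Y₂ ⊆ X₂, T (Y₁ ∪ Y₂) = T Y₁ * T Y₂) :
    ∑ Y₁ ∈ X₁.powerset, ∑ Y₂ ∈ X₂.powerset,
        T (Y₁ ∪ Y₂) * (opSum T (X₂ \ Y₂) * opSum T (X₁ \ Y₁)) =
      if X₁ ∪ X₂ = ∅ then 1 else 0 := by
  calc _ = ∑ Y₁ ∈ X₁.powerset,
          T Y₁ * (∑ Y₂ ∈ X₂.powerset, T Y₂ * opSum T (X₂ \ Y₂)) * opSum T (X₁ \ Y₁) := by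
        refine sum_congr rfl fun Y₁ h₁ => ?_
        rw [mul_sum, sum_mul]
        refine sum_congr rfl fun Y₂ h₂ => ?_
        rw [hfac _ (mem_powerset.1 h₁) _ (mem_powerset.1 h₂)]
        simp only [mul_assoc]
    _ = _ := by
        rcases eq_or_ne X₂ ∅ with rfl | hX₂
        · simp [hT, sum_powerset_mul_opSum hT]
        · simp [sum_powerset_mul_opSum hT, hX₂]

theorem opSum_union {T : Finset ι → A} (hT : T ∅ = 1) {S₁ S₂ : Finset ι} (hd : Disjoint S₁ S₂)
    (hfac : ∀ Y₁ ⊆ S₁, ∀ Y₂ ⊆ S₂, T (Y₁ ∪ Y₂) = T Y₁ * T Y₂) :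
    opSum T (S₁ ∪ S₂) = opSum T S₂ * opSum T S₁ := by
  have hinv : ∀ X ⊆ S₁ ∪ S₂, opSum T (X ∩ S₂) * opSum T (X ∩ S₁) = opSum T X := by
    refine eq_opSum_of_sum_powerset_mul hT fun X hX => ?_
    have hX : X = X ∩ S₁ ∪ X ∩ S₂ := by rw [← inter_union_distrib_left, inter_eq_left.2 hX]
    have hd' : Disjoint (X ∩ S₁) (X ∩ S₂) := hd.mono inter_subset_right inter_subset_right
    conv_lhs => rw [hX, sum_powerset_union_of_disjoint hd']
    conv_rhs => rw [hX]
    rw [← sum_powerset_union_mul_opSum_mul_opSum hT fun Y₁ h₁ Y₂ h₂ =>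
      hfac Y₁ (h₁.trans inter_subset_right) Y₂ (h₂.trans inter_subset_right)]
    refine sum_congr rfl fun Y₁ h₁ => sum_congr rfl fun Y₂ h₂ => ?_
    have := disjoint_left.1 hd
    rw [mem_powerset, subset_iff] at h₁ h₂
    congr 3 <;> ext a <;> simp only [mem_inter, mem_sdiff, mem_union] <;> grind
  simpa using (hinv (S₁ ∪ S₂) subset_rfl).symm

theorem chronoBar_union {T : Finset ι → A} (hT : T ∅ = 1) {S₁ S₂ : Finset ι}
    (hd : Disjoint S₁ S₂) (hfac : ∀ Y₁ ⊆ S₁, ∀ Y₂ ⊆ S₂, T (Y₁ ∪ Y₂) = T Y₁ * T Y₂) :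
    chronoBar T (S₁ ∪ S₂) = chronoBar T S₂ * chronoBar T S₁ := by
  have hc : ∀ (n : ℕ) (a : A), Commute ((-1) ^ n) a :=
    fun n a => (Commute.neg_one_left a).pow_left n
  rw [chronoBar, chronoBar, chronoBar, card_union_of_disjoint hd, pow_add, opSum_union hT hd hfac,
    mul_assoc, mul_assoc, (hc #S₁ (opSum T S₂)).symm.left_comm,
    (hc #S₂ ((-1) ^ #S₁)).left_comm]

theorem inl_add_inr_mul_inl_add_inr (a a' b b' : A) :
    (inl a + inr a' : DualNumber A) * (inl b + inr b') = inl (a * b) + inr (a' * b + a * b') := by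
  ext <;> simp [add_comm]

theorem opSum_inl_add_inr (T T' : Finset ι → A) (X : Finset ι) :
    opSum (fun Y => (inl (T Y) + inr (T' Y) : DualNumber A)) X =
      inl (opSum T X) + inr (opSumD T T' X) := by
  induction X using Finset.strongInduction with
  | H X ih =>
  rcases eq_or_ne X ∅ with rfl | hX
  · simp
  rw [opSum_of_ne_empty _ hX, opSum_of_ne_empty _ hX, opSumD_of_ne_empty _ _ hX,
    sum_congr rfl fun Y hY => by rw [ih _ (sdiff_ssubset_of_mem_erase_empty hY),
      inl_add_inr_mul_inl_add_inr]]
  ext <;> simp [fst_sum, snd_sum]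

theorem chronoBar_inl_add_inr (T T' : Finset ι → A) (X : Finset ι) :
    chronoBar (fun Y => (inl (T Y) + inr (T' Y) : DualNumber A)) X =
      inl (chronoBar T X) + inr (chronoBarD T T' X) := by
  have hsign : (-1 : DualNumber A) ^ #X = inl ((-1) ^ #X) := by rw [← inl_pow, inl_neg, inl_one]
  rw [chronoBar, chronoBar, chronoBarD, opSum_inl_add_inr, hsign]
  ext <;> simp

end

theorem antichrono_derived_reverse_causality_general {A : Type*} [Ring A]
    {ι : Type*} [DecidableEq ι]
    (x : ι → Fin 4 → ℝ) (T : Finset ι → A) (hT1 : T ∅ = 1)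
    (T' : ι → Finset ι → A) (hT'0 : ∀ l, ∀ X : Finset ι, l ∉ X → T' l X = 0)
    (hcausT : ∀ S₁ S₂ : Finset ι, Disjoint S₁ S₂ →
      (∀ i ∈ S₁, ∀ j ∈ S₂, x i - x j ∉ closure Vminus) → T (S₁ ∪ S₂) = T S₁ * T S₂)
    (hcausT' : ∀ l, ∀ S₁ S₂ : Finset ι, Disjoint S₁ S₂ →
      (∀ i ∈ S₁, ∀ j ∈ S₂, x i - x j ∉ closure Vminus) →
        T' l (S₁ ∪ S₂) = T' l S₁ * T S₂ + T S₁ * T' l S₂)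
    (l : ι) (S₁ S₂ : Finset ι) (hd : Disjoint S₁ S₂)
    (hx : ∀ i ∈ S₁, ∀ j ∈ S₂, x i - x j ∉ closure Vminus) :
    chronoBarD T (T' l) (S₁ ∪ S₂) =
      chronoBarD T (T' l) S₂ * chronoBar T S₁ + chronoBar T S₂ * chronoBarD T (T' l) S₁ := by
  let Tε : Finset ι → DualNumber A := fun Y => inl (T Y) + inr (T' l Y)
  have hTε : Tε ∅ = 1 := by simp [Tε, hT1, hT'0 l ∅ (notMem_empty l)]
  have hfac : ∀ Y₁ ⊆ S₁, ∀ Y₂ ⊆ S₂, Tε (Y₁ ∪ Y₂) = Tε Y₁ * Tε Y₂ := fun Y₁ h₁ Y₂ h₂ => by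
    have hd' := hd.mono h₁ h₂
    have hx' : ∀ i ∈ Y₁, ∀ j ∈ Y₂, x i - x j ∉ closure Vminus :=
      fun i hi j hj => hx i (h₁ hi) j (h₂ hj)
    simp only [Tε, hcausT _ _ hd' hx', hcausT' l _ _ hd' hx', inl_add_inr_mul_inl_add_inr]
  have h := congrArg snd (chronoBar_union hTε hd hfac)
  simp only [Tε, chronoBar_inl_add_inr, inl_add_inr_mul_inl_add_inr, snd_add, snd_inl, snd_inr,
    zero_add] at h
  rw [h, add_comm]

/-- If the chronological products `T` and the derived families `T'_l` satisfy the two causality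
axioms, then the barred families factorize in reversed order:
`T̄'_l(S₁ ∪ S₂) = T̄'_l(S₂)·T̄(S₁) + T̄(S₂)·T̄'_l(S₁)` whenever `S₁, S₂` are disjoint and
`x(S₁) ≥ x(S₂)`. -/
theorem antichrono_derived_reverse_causality {A : Type*} [Ring A]
    {ι : Type*} [Fintype ι] [DecidableEq ι]
    (x : ι → Fin 4 → ℝ) (T : Finset ι → A) (hT1 : T ∅ = 1)
    (T' : ι → Finset ι → A) (hT'0 : ∀ l, ∀ X : Finset ι, l ∉ X → T' l X = 0)
    (hcausT : ∀ S₁ S₂ : Finset ι, Disjoint S₁ S₂ →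
      (∀ i ∈ S₁, ∀ j ∈ S₂, x i - x j ∉ closure Vminus) → T (S₁ ∪ S₂) = T S₁ * T S₂)
    (hcausT' : ∀ l, ∀ S₁ S₂ : Finset ι, Disjoint S₁ S₂ →
      (∀ i ∈ S₁, ∀ j ∈ S₂, x i - x j ∉ closure Vminus) →
        T' l (S₁ ∪ S₂) = T' l S₁ * T S₂ + T S₁ * T' l S₂)
    (l : ι) (S₁ S₂ : Finset ι) (hd : Disjoint S₁ S₂)
    (hx : ∀ i ∈ S₁, ∀ j ∈ S₂, x i - x j ∉ closure Vminus) :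
    chronoBarD T (T' l) (S₁ ∪ S₂) =
      chronoBarD T (T' l) S₂ * chronoBar T S₁ + chronoBar T S₂ * chronoBarD T (T' l) S₁ :=
  antichrono_derived_reverse_causality_general x T hT1 T' hT'0 hcausT hcausT' l S₁ S₂ hd hx
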